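/- Let ν be an infinite regular cardinal with ν^{<ν} = ν, let A ⊆ ν^ν and let t ∈ ν^{<ν}, and suppose that A ∩ N_t is ν-Baire. Then A is ν-meager in N_t if and only if player I does not have a winning strategy in G^t_ν(A). -/

import Mathlib

universe u

noncomputable section

/-! ## Sequences of ordinals

`SeqLT o v` is the set `v^{<o}` of all sequences of ordinals `< v` of length `< o`
(for `o > 0`; values beyond the length are normalized to `0`).
`SeqFull o v` is the generalized Baire space `v^o` of all functions from ordinals `< o`
to ordinals `< v`. -/

/-- An element of `v^{<o}`: a sequence of ordinals `< v` of length `< o`. -/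
structure SeqLT (o v : Ordinal.{u}) : Type (u + 1) where
  len : Ordinal.{u}
  len_lt : len < o ⊔ 1
  val : Ordinal.{u} → Ordinal.{u}
  val_lt : ∀ β, β < len → val β < v
  val_zero : ∀ β, len ≤ β → val β = 0

namespace SeqLT

variable {o v : Ordinal.{u}}

/-- `s ⊆ t`, i.e. `t` end-extends `s`. -/
protected def le (s t : SeqLT o v) : Prop :=
  s.len ≤ t.len ∧ ∀ β, β < s.len → s.val β = t.val β

/-- `s ⊊ t`, i.e. `t` properly end-extends `s`. -/
protected def slt (s t : SeqLT o v) : Prop :=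
  s.le t ∧ s.len < t.len

/-- The empty sequence. -/
protected def empty (o v : Ordinal.{u}) : SeqLT o v where
  len := 0
  len_lt := lt_sup_iff.mpr (Or.inr zero_lt_one)
  val := fun _ => 0
  val_lt := fun β h => absurd h (show ¬ β < 0 by simp)
  val_zero := fun _ _ => rfl

/-- `s⌢⟨β⟩`: the sequence `s` extended by the single value `β`. -/
def snoc (s : SeqLT o v) (β : Ordinal.{u}) : SeqLT o v :=
  if h : s.len + 1 < o ⊔ 1 ∧ β < v then
    { len := s.len + 1
      len_lt := h.1
      val := fun γ => if γ = s.len then β else s.val γ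
      val_lt := fun γ hγ => by
        rcases eq_or_ne γ s.len with rfl | hne
        · simpa using h.2
        · simp only [if_neg hne]
          refine s.val_lt γ (lt_of_le_of_ne ?_ hne)
          rw [Ordinal.add_one_eq_succ] at hγ
          exact Order.lt_succ_iff.mp hγ
      val_zero := fun γ hγ => by
        have h1 : s.len < γ :=
          lt_of_lt_of_le (by rw [Ordinal.add_one_eq_succ]; exact Order.lt_succ s.len) hγ
        simp only [if_neg h1.ne']
        exact s.val_zero γ h1.le }
  else s

protected theorem le_refl (s : SeqLT o v) : s.le s :=
  ⟨le_rfl, fun _ _ => rfl⟩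

protected theorem le_trans {s t u : SeqLT o v} (h1 : s.le t) (h2 : t.le u) : s.le u :=
  ⟨h1.1.trans h2.1, fun β hβ => (h1.2 β hβ).trans (h2.2 β (lt_of_lt_of_le hβ h1.1))⟩

end SeqLT

/-- An element of the generalized Baire space `v^o`. -/
structure SeqFull (o v : Ordinal.{u}) : Type (u + 1) where
  val : Ordinal.{u} → Ordinal.{u}
  val_lt : ∀ β, β < o → val β < v
  val_zero : ∀ β, o ≤ β → val β = 0

/-- The restriction `x ↾ β` of `x : v^o` to an ordinal `β < o`. -/
def SeqFull.res {o v : Ordinal.{u}} (x : SeqFull o v) (β : Ordinal.{u}) : SeqLT o v :=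
  if h : β < o ⊔ 1 then
    { len := β
      len_lt := h
      val := fun γ => if γ < β then x.val γ else 0
      val_lt := fun γ hγ => by
        simp only [if_pos hγ]
        rcases lt_sup_iff.mp h with h' | h'
        · exact x.val_lt γ (hγ.trans h')
        · rw [Ordinal.lt_one_iff_zero] at h'
          exact absurd (h' ▸ hγ) (show ¬ γ < 0 by simp)
      val_zero := fun γ hγ => if_neg (not_lt.mpr hγ) }
  else SeqLT.empty o v

/-- `s ⊆ x`: the sequence `s` is an initial segment of `x : v^o`. -/
def SeqLT.prefixOf {o v : Ordinal.{u}} (s : SeqLT o v) (x : SeqFull o v) : Prop :=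
  ∀ β, β < s.len → s.val β = x.val β

/-! ## The bounded topology -/

/-- The basic open set `N_t`. -/
def basicOpen {o v : Ordinal.{u}} (t : SeqLT o v) : Set (SeqFull o v) :=
  {x | t.prefixOf x}

/-- The bounded (standard) topology on the generalized Baire space, generated by the
basic open sets `N_t`. -/
instance (o v : Ordinal.{u}) : TopologicalSpace (SeqFull o v) :=
  TopologicalSpace.generateFrom {U | ∃ t : SeqLT o v, U = basicOpen t}

/-- `A` is a nowhere dense subset of `B` (in the subspace topology on `B`). -/
def NowhereDenseIn {o v : Ordinal.{u}} (A B : Set (SeqFull o v)) : Prop :=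
  A ⊆ B ∧ interior (closure {x : ↥B | (x : SeqFull o v) ∈ A}) = ∅

/-- `A` is `o`-meager in `B`: `A ∩ B` is the union of (card of) `o` many nowhere dense
subsets of `B`. -/
def MeagerIn {o v : Ordinal.{u}} (A B : Set (SeqFull o v)) : Prop :=
  ∃ F : {β : Ordinal.{u} // β < o} → Set (SeqFull o v),
    (∀ i, NowhereDenseIn (F i) B) ∧ A ∩ B = ⋃ i, F i

/-- `A` is comeager in `B`: `B \ A` is meager in `B`. -/
def ComeagerIn {o v : Ordinal.{u}} (A B : Set (SeqFull o v)) : Prop :=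
  MeagerIn (B \ A) B

/-- `A` has the `o`-Baire property: for some open `U`, `A △ U` is meager. -/
def BaireSet {o v : Ordinal.{u}} (A : Set (SeqFull o v)) : Prop :=
  ∃ U : Set (SeqFull o v), IsOpen U ∧ MeagerIn (symmDiff A U) Set.univ

/-! ## Homomorphisms of `v^{<o}` -/

/-- A homomorphism: strictly extension-preserving map of `v^{<o}` to itself. -/
def IsHom {o v : Ordinal.{u}} (f : SeqLT o v → SeqLT o v) : Prop :=
  ∀ s t : SeqLT o v, s.slt t → (f s).slt (f t)

/-- `f` is dense: for every `s` and every `t ⊇ f(s)` there is `β < v` with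
`f(s⌢⟨β⟩) ⊇ t`. -/
def IsDenseMap {o v : Ordinal.{u}} (f : SeqLT o v → SeqLT o v) : Prop :=
  ∀ s t : SeqLT o v, (f s).le t → ∃ β, β < v ∧ t.le (f (s.snoc β))

/-- `u = ⋃_{α<γ} s α` for a chain `s`. -/
def IsUnionOfChain {o v : Ordinal.{u}} (u : SeqLT o v) (γ : Ordinal.{u})
    (s : Ordinal.{u} → SeqLT o v) : Prop :=
  (∀ α, α < γ → (s α).le u) ∧ ∀ β, β < u.len → ∃ α, α < γ ∧ β < (s α).len

/-- `f` is continuous: for every limit `γ < o` and every strictly increasing sequence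
`⟨s_α : α < γ⟩`, `f(⋃_{α<γ} s_α) = ⋃_{α<γ} f(s_α)`. -/
def IsContinuousMap {o v : Ordinal.{u}} (f : SeqLT o v → SeqLT o v) : Prop :=
  ∀ γ : Ordinal.{u}, Order.IsSuccLimit γ → γ < o →
    ∀ s : Ordinal.{u} → SeqLT o v, (∀ α β, α < β → β < γ → (s α).slt (s β)) →
      ∀ u : SeqLT o v, IsUnionOfChain u γ s → IsUnionOfChain (f u) γ fun α => f (s α)

/-- `y = f*(x) = ⋃_{α<o} f(x↾α)` for a homomorphism `f`. -/
def FStarVal {o v : Ordinal.{u}} (f : SeqLT o v → SeqLT o v) (x y : SeqFull o v) : Prop :=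
  (∀ α, α < o → (f (x.res α)).prefixOf y) ∧
    ∀ β, β < o → ∃ α, α < o ∧ β < (f (x.res α)).len

/-! ## Clubs and the almost Baire property -/

/-- `C` is a club (closed unbounded set) in the ordinal `o`. -/
def IsClubIn (C : Set Ordinal.{u}) (o : Ordinal.{u}) : Prop :=
  (∀ γ ∈ C, γ < o) ∧ (∀ β, β < o → ∃ γ ∈ C, β ≤ γ) ∧
    ∀ β, β < o → 0 < β → (∀ γ, γ < β → ∃ ξ ∈ C, γ < ξ ∧ ξ < β) → β ∈ C

/-- The set of functions coding elements of the club filter as characteristic functions. -/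
def ClSet (o v : Ordinal.{u}) : Set (SeqFull o v) :=
  {x | ∃ C : Set Ordinal.{u}, IsClubIn C o ∧ ∀ i ∈ C, x.val i ≠ 0}

/-- The set of functions coding elements of the nonstationary ideal. -/
def NsSet (o v : Ordinal.{u}) : Set (SeqFull o v) :=
  {x | ∃ C : Set Ordinal.{u}, IsClubIn C o ∧ ∀ i ∈ C, x.val i = 0}

/-- `A` is almost Baire: there is a dense homomorphism `f` with `ran f* ⊆ A`, or a dense
continuous homomorphism `f` with `f ∅ = ∅` and `ran f* ⊆ Aᶜ`. -/
def AlmostBaire {o v : Ordinal.{u}} (A : Set (SeqFull o v)) : Prop :=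
  ∃ f : SeqLT o v → SeqLT o v, IsHom f ∧ IsDenseMap f ∧
    ((∀ x y, FStarVal f x y → y ∈ A) ∨
      ((∀ x y, FStarVal f x y → y ∉ A) ∧ IsContinuousMap f ∧
        f (SeqLT.empty o v) = SeqLT.empty o v))

/-! ## Banach–Mazur games of length `o`

A run of the game is a strictly increasing sequence `⟨s_α : α < o⟩` in `v^{<o}`;
player I plays at even positions (`0` and limits count as even), player II at odd ones.
In the game `G^t` the first move of player I must extend `t`; taking `t = ∅` gives the
plain Banach–Mazur game. -/

/-- `γ` is an even ordinal (`0` and limits are even). -/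
def EvenOrd (γ : Ordinal.{u}) : Prop := ∃ δ : Ordinal.{u}, γ = 2 * δ

/-- `γ` is an odd ordinal. -/
def OddOrd (γ : Ordinal.{u}) : Prop := ∃ δ : Ordinal.{u}, γ = 2 * δ + 1

/-- The moves of a (partial) run, as a function on ordinals. -/
abbrev Play (o v : Ordinal.{u}) := Ordinal.{u} → SeqLT o v

/-- A strategy: given the length of the current position and the moves so far,
produce the next move. -/
abbrev Strat (o v : Ordinal.{u}) := Ordinal.{u} → Play o v → SeqLT o v

/-- `p` is a legal partial run of length `γ` of the game `G^t`: strictly increasing moves,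
the first move extends `t`, and the moves beyond `γ` are normalized to `∅`. -/
def IsPos {o v : Ordinal.{u}} (t : SeqLT o v) (p : Play o v) (γ : Ordinal.{u}) : Prop :=
  (∀ α β, α < β → β < γ → (p α).slt (p β)) ∧ (0 < γ → t.le (p 0)) ∧
    ∀ α, γ ≤ α → p α = SeqLT.empty o v

/-- The restriction of a run to its first `γ` moves. -/
def resPlay {o v : Ordinal.{u}} (p : Play o v) (γ : Ordinal.{u}) : Play o v :=
  fun α => if α < γ then p α else SeqLT.empty o v

/-- `m` is a legal move at the position `p` of length `γ` in the game `G^t`. -/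
def MoveOK {o v : Ordinal.{u}} (t : SeqLT o v) (p : Play o v) (γ : Ordinal.{u})
    (m : SeqLT o v) : Prop :=
  (∀ α, α < γ → (p α).slt m) ∧ (γ = 0 → t.le m)

/-- `σ` is a strategy for player I in `G^t`: it assigns a legal move to every legal
position of even length. -/
def LegalI {o v : Ordinal.{u}} (t : SeqLT o v) (σ : Strat o v) : Prop :=
  ∀ γ, γ < o → EvenOrd γ → ∀ p, IsPos t p γ → MoveOK t p γ (σ γ p)

/-- `σ` is a strategy for player II in `G^t`: it assigns a legal move to every legal
position of odd length. -/
def LegalII {o v : Ordinal.{u}} (t : SeqLT o v) (σ : Strat o v) : Prop :=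
  ∀ γ, γ < o → OddOrd γ → ∀ p, IsPos t p γ → MoveOK t p γ (σ γ p)

/-- The first `γ` moves of `p` follow the strategy `σ` of player I. -/
def FollowsI {o v : Ordinal.{u}} (σ : Strat o v) (p : Play o v) (γ : Ordinal.{u}) : Prop :=
  ∀ α, α < γ → EvenOrd α → p α = σ α (resPlay p α)

/-- The first `γ` moves of `p` follow the strategy `σ` of player II. -/
def FollowsII {o v : Ordinal.{u}} (σ : Strat o v) (p : Play o v) (γ : Ordinal.{u}) : Prop :=
  ∀ α, α < γ → OddOrd α → p α = σ α (resPlay p α)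

/-- `x = ⋃_{α<o} p α` is the outcome of the complete run `p`. -/
def IsOutcome {o v : Ordinal.{u}} (p : Play o v) (x : SeqFull o v) : Prop :=
  (∀ α, α < o → (p α).prefixOf x) ∧ ∀ β, β < o → ∃ α, α < o ∧ β < (p α).len

/-- Player I has a winning strategy in the Banach–Mazur game `G^t(A)` of length `o`. -/
def WinIStrat {o v : Ordinal.{u}} (t : SeqLT o v) (A : Set (SeqFull o v)) : Prop :=
  ∃ σ : Strat o v, LegalI t σ ∧
    ∀ p : Play o v, IsPos t p o → FollowsI σ p o → ∃ x, IsOutcome p x ∧ x ∈ A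

/-- Player II has a winning strategy in the Banach–Mazur game `G^t(A)` of length `o`. -/
def WinIIStrat {o v : Ordinal.{u}} (t : SeqLT o v) (A : Set (SeqFull o v)) : Prop :=
  ∃ σ : Strat o v, LegalII t σ ∧
    ∀ p : Play o v, IsPos t p o → FollowsII σ p o → ∃ x, IsOutcome p x ∧ x ∉ A

/-- `σ` is a tactic for player II: its moves depend only on the union of the previous moves. -/
def IsTacticII {o v : Ordinal.{u}} (t : SeqLT o v) (σ : Strat o v) : Prop :=
  ∃ f : SeqLT o v → SeqLT o v, ∀ γ, γ < o → OddOrd γ → ∀ p, IsPos t p γ →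
    ∀ u, IsUnionOfChain u γ p → σ γ p = f u

/-- Player II has a winning tactic in the Banach–Mazur game `G^t(A)` of length `o`. -/
def WinIITactic {o v : Ordinal.{u}} (t : SeqLT o v) (A : Set (SeqFull o v)) : Prop :=
  ∃ σ : Strat o v, LegalII t σ ∧ IsTacticII t σ ∧
    ∀ p : Play o v, IsPos t p o → FollowsII σ p o → ∃ x, IsOutcome p x ∧ x ∉ A

/-! ## Trees and perfect sets -/

/-- A subtree of `v^{<o}`: a downwards closed set of sequences. -/
def IsSubtree {o v : Ordinal.{u}} (T : Set (SeqLT o v)) : Prop :=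
  ∀ s ∈ T, ∀ r : SeqLT o v, r.le s → r ∈ T

/-- `T` is closed: every strictly increasing sequence in `T` of length `< o` has an
upper bound in `T`. -/
def TreeClosed {o v : Ordinal.{u}} (T : Set (SeqLT o v)) : Prop :=
  ∀ γ : Ordinal.{u}, γ < o → ∀ s : Ordinal.{u} → SeqLT o v,
    (∀ α β, α < β → β < γ → (s α).slt (s β)) → (∀ α, α < γ → s α ∈ T) →
      ∃ b ∈ T, ∀ α, α < γ → (s α).le b

/-- `t` is a direct successor of `s`. -/
def IsDirectSucc {o v : Ordinal.{u}} (s t : SeqLT o v) : Prop :=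
  s.slt t ∧ t.len = s.len + 1

/-- `T` is a perfect tree: a (nonempty) closed subtree whose splitting nodes are cofinal. -/
def IsPerfectTree {o v : Ordinal.{u}} (T : Set (SeqLT o v)) : Prop :=
  T.Nonempty ∧ IsSubtree T ∧ TreeClosed T ∧
    ∀ s ∈ T, ∃ t ∈ T, s.le t ∧
      ∃ t₁ ∈ T, ∃ t₂ ∈ T, IsDirectSucc t t₁ ∧ IsDirectSucc t t₂ ∧ t₁ ≠ t₂

/-- The body `[T]` of a tree `T`: the set of branches of length `o` through `T`. -/
def treeBody {o v : Ordinal.{u}} (T : Set (SeqLT o v)) : Set (SeqFull o v) :=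
  {x | ∀ α, α < o → x.res α ∈ T}


/-!
Both directions are diagonalisations of length `ν`. If `A ∩ N_t = ⋃_{δ<ν} F_δ` with each `F_δ`
nowhere dense in `N_t`, player II answers every strategy of player I by extending, at move
`2δ + 1`, the current position to some `m` with `N_m ∩ F_δ = ∅`; the outcome then lies in `N_t`
but in no `F_δ`, hence not in `A`. Conversely, let `(A ∩ N_t) △ U ⊆ ⋃_{δ<ν} G_δ` with `U` open
and the `G_δ` nowhere dense. If `U` misses `N_t`, then `A ∩ N_t ⊆ ⋃ G_δ` and `A` is meager in
`N_t`. Otherwise `N_s ⊆ U` for some `s ⊇ t`, and player I wins by starting inside `N_s` and, at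
move `2δ`, extending the union of the previous moves so as to avoid `G_δ`: the outcome lies in
`U ∩ N_t` and in no `G_δ`, hence in `A`. Regularity of `ν` is what keeps the union of fewer than
`ν` moves a legal position.
-/

open Ordinal Cardinal Set TopologicalSpace

namespace SeqLT

variable {o v : Ordinal.{u}} {s r m : SeqLT o v} {x : SeqFull o v}

theorem le.trans_slt (h₁ : s.le r) (h₂ : r.slt m) : s.slt m :=
  ⟨SeqLT.le_trans h₁ h₂.1, h₁.1.trans_lt h₂.2⟩

theorem prefixOf.of_le (h : s.le r) (hr : r.prefixOf x) : s.prefixOf x := fun β hβ =>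
  (h.2 β hβ).trans (hr β (hβ.trans_le h.1))

theorem prefixOf.le_or_le (hs : s.prefixOf x) (hr : r.prefixOf x) : s.le r ∨ r.le s := by
  rcases le_total s.len r.len with h | h
  · exact Or.inl ⟨h, fun β hβ => (hs β hβ).trans (hr β (hβ.trans_le h)).symm⟩
  · exact Or.inr ⟨h, fun β hβ => (hr β hβ).trans (hs β (hβ.trans_le h)).symm⟩

end SeqLT

section Restriction

variable {o v : Ordinal.{u}}

theorem SeqFull.res_len (x : SeqFull o v) {β : Ordinal.{u}} (hβ : β < o) : (x.res β).len = β := by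
  rw [SeqFull.res, dif_pos (lt_sup_of_lt_left hβ)]

theorem SeqFull.prefixOf_res (x : SeqFull o v) {β : Ordinal.{u}} (hβ : β < o) :
    (x.res β).prefixOf x := by
  intro γ hγ
  rw [x.res_len hβ] at hγ
  simp [SeqFull.res, lt_sup_of_lt_left hβ, hγ]

theorem SeqLT.prefixOf.le_res {s : SeqLT o v} {x : SeqFull o v} (hs : s.prefixOf x)
    {β : Ordinal.{u}} (hβ : β < o) (hsβ : s.len ≤ β) : s.le (x.res β) := by
  refine ⟨(x.res_len hβ).symm ▸ hsβ, fun γ hγ => ?_⟩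
  simp [SeqFull.res, lt_sup_of_lt_left hβ, hγ.trans_le hsβ, hs γ hγ]

end Restriction

section Topology

variable {o v : Ordinal.{u}}

theorem basicOpen_mono {s r : SeqLT o v} (h : s.le r) : basicOpen r ⊆ basicOpen s :=
  fun _ hx => SeqLT.prefixOf.of_le h hx

theorem isOpen_basicOpen (s : SeqLT o v) : IsOpen (basicOpen s) :=
  isOpen_generateFrom_of_mem ⟨s, rfl⟩

theorem isTopologicalBasis_basicOpen :
    IsTopologicalBasis {U : Set (SeqFull o v) | ∃ t, U = basicOpen t} := by
  refine ⟨?_, ?_, rfl⟩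
  · rintro _ ⟨s, rfl⟩ _ ⟨r, rfl⟩ x ⟨hxs, hxr⟩
    rcases hxs.le_or_le hxr with h | h
    · exact ⟨basicOpen r, ⟨r, rfl⟩, hxr, subset_inter (basicOpen_mono h) subset_rfl⟩
    · exact ⟨basicOpen s, ⟨s, rfl⟩, hxs, subset_inter subset_rfl (basicOpen_mono h)⟩
  · refine sUnion_eq_univ_iff.2 fun x => ⟨basicOpen (SeqLT.empty o v), ⟨_, rfl⟩, ?_⟩
    exact fun β hβ => absurd hβ (not_lt_zero : ¬ β < 0)

theorem nowhereDenseIn_iff_disjoint {F B : Set (SeqFull o v)} (hB : IsOpen B) :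
    NowhereDenseIn F B ↔ F ⊆ B ∧ Disjoint (interior (closure F)) B := by
  have hval : IsOpenMap ((↑) : B → SeqFull o v) := hB.isOpenMap_subtype_val
  have hpre : interior (closure {x : B | (x : SeqFull o v) ∈ F}) =
      (↑) ⁻¹' interior (closure F) := by
    rw [hval.preimage_interior_eq_interior_preimage continuous_subtype_val,
      hval.preimage_closure_eq_closure_preimage continuous_subtype_val]
    rfl
  rw [NowhereDenseIn, hpre, Subtype.preimage_coe_eq_empty, ← disjoint_iff_inter_eq_empty,
    disjoint_comm]

theorem MeagerIn.exists_cover {A B : Set (SeqFull o v)} (h : MeagerIn A B) :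
    ∃ F : Ordinal.{u} → Set (SeqFull o v),
      (∀ δ < o, NowhereDenseIn (F δ) B) ∧ A ∩ B ⊆ ⋃ δ < o, F δ := by
  classical
  obtain ⟨F, hF, hAB⟩ := h
  refine ⟨fun δ => if hδ : δ < o then F ⟨δ, hδ⟩ else ∅, fun δ hδ => by simpa [hδ] using hF ⟨δ, hδ⟩,
    ?_⟩
  rw [hAB]
  rintro x hx
  obtain ⟨⟨δ, hδ⟩, hxδ⟩ := mem_iUnion.1 hx
  exact mem_iUnion₂.2 ⟨δ, hδ, by simpa [hδ] using hxδ⟩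

theorem meagerIn_of_subset_iUnion {A B : Set (SeqFull o v)} {G : Ordinal.{u} → Set (SeqFull o v)}
    (hB : IsOpen B) (hG : ∀ δ < o, NowhereDenseIn (G δ) univ) (hA : A ∩ B ⊆ ⋃ δ < o, G δ) :
    MeagerIn A B := by
  refine ⟨fun δ => G δ ∩ (A ∩ B), fun δ => ?_, ?_⟩
  · have hGδ := ((nowhereDenseIn_iff_disjoint isOpen_univ).1 (hG δ.1 δ.2)).2
    refine (nowhereDenseIn_iff_disjoint hB).2 ⟨inter_subset_right.trans inter_subset_right, ?_⟩
    exact (hGδ.mono_left (interior_mono (closure_mono inter_subset_left))).mono_right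
      (subset_univ B)
  · refine subset_antisymm (fun x hx => ?_) (iUnion_subset fun _ => inter_subset_right)
    obtain ⟨δ, hδ, hxδ⟩ := mem_iUnion₂.1 (hA hx)
    exact mem_iUnion.2 ⟨⟨δ, hδ⟩, hxδ, hx⟩

end Topology

section BaireSpace

variable {ν : Cardinal.{u}}

theorem one_lt_ord (hν : ℵ₀ ≤ ν) : (1 : Ordinal.{u}) < ν.ord :=
  Ordinal.one_lt_omega0.trans_le (omega0_le_ord.2 hν)

theorem two_mul_lt_ord (hν : ℵ₀ ≤ ν) {δ : Ordinal.{u}} (hδ : δ < ν.ord) : 2 * δ < ν.ord :=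
  isPrincipal_mul_ord hν ((Ordinal.natCast_lt_omega0 2).trans_le (omega0_le_ord.2 hν)) hδ

theorem SeqLT.len_lt_ord (hν : ℵ₀ ≤ ν) (s : SeqLT ν.ord ν.ord) : s.len < ν.ord :=
  s.len_lt.trans_eq (sup_eq_left.2 (one_lt_ord hν).le)

def SeqLT.toFull (hν : ℵ₀ ≤ ν) (s : SeqLT ν.ord ν.ord) : SeqFull ν.ord ν.ord where
  val := s.val
  val_lt β _ := by
    by_cases hβ : β < s.len
    · exact s.val_lt β hβ
    · rw [s.val_zero β (not_lt.1 hβ)]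
      exact (one_lt_ord hν).pos
  val_zero β hβ := s.val_zero β ((s.len_lt_ord hν).le.trans hβ)

theorem SeqLT.mem_basicOpen_toFull (hν : ℵ₀ ≤ ν) (s : SeqLT ν.ord ν.ord) :
    s.toFull hν ∈ basicOpen s :=
  fun _ _ => rfl

theorem SeqLT.prefixOf.exists_slt (hν : ℵ₀ ≤ ν) {s r : SeqLT ν.ord ν.ord}
    {x : SeqFull ν.ord ν.ord} (hs : s.prefixOf x) (hr : r.prefixOf x) :
    ∃ m : SeqLT ν.ord ν.ord, s.slt m ∧ r.le m ∧ m.prefixOf x := by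
  have hs1 : s.len + 1 < ν.ord := (isSuccLimit_ord hν).add_one_lt (s.len_lt_ord hν)
  set β := max (s.len + 1) r.len
  have hβ : β < ν.ord := max_lt hs1 (r.len_lt_ord hν)
  have hsβ : s.len < β := (Order.lt_add_one_iff.2 le_rfl).trans_le (le_max_left _ _)
  refine ⟨x.res β, ⟨hs.le_res hβ hsβ.le, (x.res_len hβ).symm ▸ hsβ⟩,
    hr.le_res hβ (le_max_right _ _), x.prefixOf_res hβ⟩

theorem NowhereDenseIn.exists_slt_disjoint (hν : ℵ₀ ≤ ν) {F B : Set (SeqFull ν.ord ν.ord)}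
    (hF : NowhereDenseIn F B) (hB : IsOpen B) {b : SeqLT ν.ord ν.ord} (hb : basicOpen b ⊆ B) :
    ∃ m : SeqLT ν.ord ν.ord, b.slt m ∧ Disjoint (basicOpen m) F := by
  have hdisj := ((nowhereDenseIn_iff_disjoint hB).1 hF).2
  have hbF : ¬basicOpen b ⊆ closure F := fun h =>
    hdisj.ne_of_mem (interior_maximal h (isOpen_basicOpen b) (b.mem_basicOpen_toFull hν))
      (hb (b.mem_basicOpen_toFull hν)) rfl
  obtain ⟨z, hzb, hzF⟩ := not_subset.1 hbF
  obtain ⟨_, ⟨r, rfl⟩, hzr, hrF⟩ :=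
    isTopologicalBasis_basicOpen.exists_subset_of_mem_open hzF isClosed_closure.isOpen_compl
  obtain ⟨m, hbm, hrm, -⟩ := SeqLT.prefixOf.exists_slt hν hzb hzr
  exact ⟨m, hbm, disjoint_left.2 fun y hy hyF => hrF (basicOpen_mono hrm hy) (subset_closure hyF)⟩

end BaireSpace

section StrictChains

variable {o v : Ordinal.{u}} {p : Play o v} {γ : Ordinal.{u}}

theorem val_eq_of_strictChain (hp : ∀ α β, α < β → β < γ → (p α).slt (p β))
    {α α' β : Ordinal.{u}} (hα : α < γ) (hα' : α' < γ) (h : β < (p α).len) (h' : β < (p α').len) :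
    (p α).val β = (p α').val β := by
  rcases lt_trichotomy α α' with hlt | rfl | hlt
  · exact (hp α α' hlt hα').1.2 β h
  · rfl
  · exact ((hp α' α hlt hα).1.2 β h').symm

theorem le_len_of_strictChain (hp : ∀ α β, α < β → β < γ → (p α).slt (p β)) :
    ∀ α < γ, α ≤ (p α).len := by
  intro α
  induction α using WellFoundedLT.induction with
  | ind α ih =>
    intro hα
    exact le_of_forall_lt fun β hβ =>
      (ih β hβ (hβ.trans hα)).trans_lt (hp β α hβ hα).2

end StrictChains

section Chains

variable {ν : Cardinal.{u}} {p : Play ν.ord ν.ord} {γ α : Ordinal.{u}}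

open Classical in
/-- `⋃_{α<γ} p α`, as an element of `ν^ν` (padded with zeros). -/
def chainLimit (hν : ℵ₀ ≤ ν) (p : Play ν.ord ν.ord) (γ : Ordinal.{u}) : SeqFull ν.ord ν.ord where
  val β := if h : ∃ α < γ, β < (p α).len then (p h.choose).val β else 0
  val_lt β _ := by
    split_ifs with h
    · exact (p h.choose).val_lt β h.choose_spec.2
    · exact (one_lt_ord hν).pos
  val_zero β hβ := dif_neg fun ⟨α, _, h⟩ => (h.trans ((p α).len_lt_ord hν)).not_ge hβ

theorem prefixOf_chainLimit (hν : ℵ₀ ≤ ν) (hp : ∀ α β, α < β → β < γ → (p α).slt (p β))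
    (hα : α < γ) : (p α).prefixOf (chainLimit hν p γ) := by
  intro β hβ
  have h : ∃ α < γ, β < (p α).len := ⟨α, hα, hβ⟩
  simp only [chainLimit, dif_pos h]
  exact val_eq_of_strictChain hp hα h.choose_spec.1 hβ h.choose_spec.2

theorem isOutcome_chainLimit (hν : ℵ₀ ≤ ν)
    (hp : ∀ α β, α < β → β < ν.ord → (p α).slt (p β)) : IsOutcome p (chainLimit hν p ν.ord) := by
  refine ⟨fun α hα => prefixOf_chainLimit hν hp hα, fun β hβ => ?_⟩
  have hβ1 : β + 1 < ν.ord := (isSuccLimit_ord hν).add_one_lt hβ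
  exact ⟨β + 1, hβ1, (Order.lt_add_one_iff.2 le_rfl).trans_le (le_len_of_strictChain hp _ hβ1)⟩

def chainUnion (hν : ℵ₀ ≤ ν) (p : Play ν.ord ν.ord) (γ : Ordinal.{u}) : SeqLT ν.ord ν.ord :=
  (chainLimit hν p γ).res (⨆ α : Iio γ, (p α).len)

theorem le_chainUnion (hν : ℵ₀ ≤ ν) (hreg : ν.IsRegular) (hγ : γ < ν.ord)
    (hp : ∀ α β, α < β → β < γ → (p α).slt (p β)) (hα : α < γ) :
    (p α).le (chainUnion hν p γ) := by
  have hsup : ⨆ α : Iio γ, (p α).len < ν.ord := by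
    refine Ordinal.lift_iSup_lt_of_lt_cof ?_ fun α => (p α).len_lt_ord hν
    rwa [← lift_cof, hreg.cof_ord, Cardinal.mk_Iio_ordinal, Cardinal.lift_lift, Cardinal.lift_lt,
      ← lt_ord]
  exact (prefixOf_chainLimit hν hp hα).le_res hsup
    (Ordinal.le_iSup (fun α : Iio γ => (p α).len) ⟨α, hα⟩)

end Chains

section Parity

variable {γ : Ordinal.{u}}

theorem evenOrd_iff : EvenOrd γ ↔ γ % 2 = 0 := by
  constructor
  · rintro ⟨δ, rfl⟩
    exact Ordinal.mul_mod 2 δ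
  · intro h
    exact ⟨γ / 2, by simpa [h] using (Ordinal.div_add_mod γ 2).symm⟩

theorem oddOrd_iff : OddOrd γ ↔ γ % 2 = 1 := by
  constructor
  · rintro ⟨δ, rfl⟩
    rw [Ordinal.mul_add_mod_self]
    exact Ordinal.mod_eq_of_lt one_lt_two
  · intro h
    exact ⟨γ / 2, by rw [← h, Ordinal.div_add_mod]⟩

theorem evenOrd_or_oddOrd (γ : Ordinal.{u}) : EvenOrd γ ∨ OddOrd γ := by
  rw [evenOrd_iff, oddOrd_iff, ← Order.le_one_iff, ← Order.lt_add_one_iff, one_add_one_eq_two]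
  exact Ordinal.mod_lt γ two_ne_zero

theorem OddOrd.not_evenOrd (h : OddOrd γ) : ¬EvenOrd γ := by
  rw [evenOrd_iff, oddOrd_iff.1 h]
  exact one_ne_zero

theorem two_mul_div_two (δ : Ordinal.{u}) : 2 * δ / 2 = δ :=
  Ordinal.mul_div_cancel δ two_ne_zero

theorem two_mul_add_one_div_two (δ : Ordinal.{u}) : (2 * δ + 1) / 2 = δ := by
  rw [Ordinal.mul_add_div δ two_ne_zero, Ordinal.div_eq_zero_of_lt one_lt_two, add_zero]

end Parity

section Games

variable {o v : Ordinal.{u}} {t s : SeqLT o v} {p : Play o v} {γ α : Ordinal.{u}}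

theorem resPlay_of_lt (h : α < γ) : resPlay p γ α = p α := if_pos h

theorem resPlay_resPlay (h : α ≤ γ) : resPlay (resPlay p γ) α = resPlay p α := by
  funext β
  by_cases hβ : β < α
  · rw [resPlay_of_lt hβ, resPlay_of_lt hβ, resPlay_of_lt (hβ.trans_le h)]
  · simp only [resPlay, if_neg hβ]

theorem IsPos.resPlay {δ : Ordinal.{u}} (hp : IsPos t p δ) (h : γ ≤ δ) :
    IsPos t (resPlay p γ) γ := by
  refine ⟨fun α β hαβ hβ => ?_, fun h0 => ?_, fun α hα => if_neg hα.not_gt⟩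
  · rw [resPlay_of_lt (hαβ.trans hβ), resPlay_of_lt hβ]
    exact hp.1 α β hαβ (hβ.trans_le h)
  · rw [resPlay_of_lt h0]
    exact hp.2.1 (h0.trans_le h)

theorem isPos_resPlay (h : ∀ α < γ, MoveOK t (resPlay p α) α (p α)) :
    IsPos t (resPlay p γ) γ := by
  refine ⟨fun α β hαβ hβ => ?_, fun h0 => ?_, fun α hα => if_neg hα.not_gt⟩
  · rw [resPlay_of_lt (hαβ.trans hβ), resPlay_of_lt hβ, ← resPlay_of_lt (p := p) hαβ]
    exact (h β hβ).1 α hαβ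
  · rw [resPlay_of_lt h0]
    exact (h 0 h0).2 rfl

theorem MoveOK.of_le {m : SeqLT o v} (hts : t.le s) (h : MoveOK s p γ m) : MoveOK t p γ m :=
  ⟨h.1, fun h0 => SeqLT.le_trans hts (h.2 h0)⟩

open Classical in
def runOf (σ τ : Strat o v) : Play o v :=
  Ordinal.lt_wf.fix fun γ run =>
    let q : Play o v := fun α => if h : α < γ then run α h else SeqLT.empty o v
    if EvenOrd γ then σ γ q else τ γ q

open Classical in
theorem runOf_eq (σ τ : Strat o v) (γ : Ordinal.{u}) :
    runOf σ τ γ =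
      if EvenOrd γ then σ γ (resPlay (runOf σ τ) γ) else τ γ (resPlay (runOf σ τ) γ) := by
  rw [runOf, WellFounded.fix_eq]
  simp only [dite_eq_ite]
  rfl

variable {σ τ : Strat o v}

theorem moveOK_runOf (hσ : LegalI t σ) (hτ : LegalII t τ) :
    ∀ γ < o, MoveOK t (resPlay (runOf σ τ) γ) γ (runOf σ τ γ) := by
  intro γ
  induction γ using WellFoundedLT.induction with
  | ind γ ih =>
    intro hγ
    have hpos := isPos_resPlay fun α hα => ih α hα (hα.trans hγ)
    rw [runOf_eq]
    split_ifs with he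
    · exact hσ γ hγ he _ hpos
    · exact hτ γ hγ ((evenOrd_or_oddOrd γ).resolve_left he) _ hpos

theorem isPos_runOf (hσ : LegalI t σ) (hτ : LegalII t τ) :
    IsPos t (resPlay (runOf σ τ) o) o :=
  isPos_resPlay (moveOK_runOf hσ hτ)

theorem followsI_runOf : FollowsI σ (resPlay (runOf σ τ) o) o := by
  intro α hα he
  rw [resPlay_of_lt hα, resPlay_resPlay hα.le, runOf_eq, if_pos he]

theorem followsII_runOf : FollowsII τ (resPlay (runOf σ τ) o) o := by
  intro α hα ho
  rw [resPlay_of_lt hα, resPlay_resPlay hα.le, runOf_eq, if_neg ho.not_evenOrd]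

end Games

section Avoidance

variable {ν : Cardinal.{u}}

open Classical in
def avoidExt (F : Set (SeqFull ν.ord ν.ord)) (b : SeqLT ν.ord ν.ord) : SeqLT ν.ord ν.ord :=
  if h : ∃ m : SeqLT ν.ord ν.ord, b.slt m ∧ Disjoint (basicOpen m) F then h.choose else b

theorem avoidExt_spec {F : Set (SeqFull ν.ord ν.ord)} {b : SeqLT ν.ord ν.ord}
    (h : ∃ m : SeqLT ν.ord ν.ord, b.slt m ∧ Disjoint (basicOpen m) F) :
    b.slt (avoidExt F b) ∧ Disjoint (basicOpen (avoidExt F b)) F := by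
  rw [avoidExt, dif_pos h]
  exact h.choose_spec

open Classical in
/-- Since `γ / 2 = δ` both at `γ = 2δ` and at `γ = 2δ + 1`, the same strategy serves either
player. -/
def avoidingStrat (hν : ℵ₀ ≤ ν) (F : Ordinal.{u} → Set (SeqFull ν.ord ν.ord))
    (s : SeqLT ν.ord ν.ord) : Strat ν.ord ν.ord :=
  fun γ p => avoidExt (F (γ / 2)) (if γ = 0 then s else chainUnion hν p γ)

variable (hν : ℵ₀ ≤ ν) {F : Ordinal.{u} → Set (SeqFull ν.ord ν.ord)}
  {B : Set (SeqFull ν.ord ν.ord)} {t s : SeqLT ν.ord ν.ord}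

theorem avoidingStrat_spec (hreg : ν.IsRegular) (hF : ∀ δ < ν.ord, NowhereDenseIn (F δ) B)
    (hB : IsOpen B) (htB : basicOpen t ⊆ B) (hts : t.le s) {γ : Ordinal.{u}} (hγ : γ < ν.ord)
    {p : Play ν.ord ν.ord} (hp : IsPos t p γ) :
    MoveOK s p γ (avoidingStrat hν F s γ p) ∧
      Disjoint (basicOpen (avoidingStrat hν F s γ p)) (F (γ / 2)) := by
  set b := if γ = 0 then s else chainUnion hν p γ
  have hb : t.le b ∧ (γ = 0 → s.le b) ∧ ∀ α < γ, (p α).le b := by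
    by_cases h0 : γ = 0
    · simp only [b, if_pos h0]
      exact ⟨hts, fun _ => SeqLT.le_refl s, fun α hα => absurd (h0 ▸ hα) (not_lt_zero : ¬ α < 0)⟩
    · simp only [b, if_neg h0]
      have hpos : 0 < γ := pos_iff_ne_zero.2 h0
      exact ⟨SeqLT.le_trans (hp.2.1 hpos) (le_chainUnion hν hreg hγ hp.1 hpos),
        fun h => absurd h h0, fun α hα => le_chainUnion hν hreg hγ hp.1 hα⟩
  have hγ2 : γ / 2 < ν.ord :=
    (Ordinal.div_le_of_le_mul (Ordinal.le_mul_right γ two_pos)).trans_lt hγ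
  have hm := avoidExt_spec ((hF _ hγ2).exists_slt_disjoint hν hB
    ((basicOpen_mono hb.1).trans htB))
  exact ⟨⟨fun α hα => (hb.2.2 α hα).trans_slt hm.1, fun h0 => SeqLT.le_trans (hb.2.1 h0) hm.1.1⟩,
    hm.2⟩

theorem avoidingStrat_spec_of_follows (hreg : ν.IsRegular)
    (hF : ∀ δ < ν.ord, NowhereDenseIn (F δ) B) (hB : IsOpen B) (htB : basicOpen t ⊆ B)
    (hts : t.le s) (p : Play ν.ord ν.ord) (hp : IsPos t p ν.ord) {γ : Ordinal.{u}} (hγ : γ < ν.ord)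
    (hfol : p γ = avoidingStrat hν F s γ (resPlay p γ)) :
    (γ = 0 → s.le (p γ)) ∧ Disjoint (basicOpen (p γ)) (F (γ / 2)) := by
  have h := avoidingStrat_spec hν hreg hF hB htB hts hγ (hp.resPlay hγ.le)
  rw [← hfol] at h
  exact ⟨h.1.2, h.2⟩

end Avoidance

section BanachMazur

variable {ν : Cardinal.{u}} {A : Set (SeqFull ν.ord ν.ord)} {t : SeqLT ν.ord ν.ord}

theorem not_winIStrat_of_meagerIn (hreg : ν.IsRegular) (hM : MeagerIn A (basicOpen t)) :
    ¬WinIStrat t A := by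
  have hν := hreg.aleph0_le
  obtain ⟨F, hF, hcover⟩ := hM.exists_cover
  rintro ⟨σ, hσ, hwin⟩
  have hspec := avoidingStrat_spec_of_follows hν hreg hF (isOpen_basicOpen t) subset_rfl
    (SeqLT.le_refl t)
  have hτ : LegalII t (avoidingStrat hν F t) := fun γ hγ _ p hp =>
    (avoidingStrat_spec hν hreg hF (isOpen_basicOpen t) subset_rfl (SeqLT.le_refl t) hγ hp).1
  have hp := isPos_runOf hσ hτ
  obtain ⟨x, hx, hxA⟩ := hwin _ hp followsI_runOf
  have h0 : 0 < ν.ord := (one_lt_ord hν).pos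
  have hxt : x ∈ basicOpen t := basicOpen_mono (hp.2.1 h0) (hx.1 0 h0)
  obtain ⟨δ, hδ, hxF⟩ := mem_iUnion₂.1 (hcover ⟨hxA, hxt⟩)
  have hγ : 2 * δ + 1 < ν.ord := (isSuccLimit_ord hν).add_one_lt (two_mul_lt_ord hν hδ)
  have hdisj := (hspec _ hp hγ (followsII_runOf _ hγ ⟨δ, rfl⟩)).2
  rw [two_mul_add_one_div_two] at hdisj
  exact hdisj.ne_of_mem (hx.1 _ hγ) hxF rfl

theorem winIStrat_of_not_meagerIn (hreg : ν.IsRegular) (hBaire : BaireSet (A ∩ basicOpen t))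
    (hnm : ¬MeagerIn A (basicOpen t)) : WinIStrat t A := by
  have hν := hreg.aleph0_le
  obtain ⟨U, hU, hmeager⟩ := hBaire
  obtain ⟨G, hG, hcover⟩ := hmeager.exists_cover
  obtain ⟨s, hts, hsU⟩ : ∃ s, t.le s ∧ basicOpen s ⊆ U := by
    by_contra! h
    refine hnm (meagerIn_of_subset_iUnion (isOpen_basicOpen t) hG fun x hx =>
      hcover ⟨mem_symmDiff.2 (Or.inl ⟨hx, fun hxU => ?_⟩), trivial⟩)
    obtain ⟨_, ⟨r, rfl⟩, hxr, hrU⟩ :=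
      isTopologicalBasis_basicOpen.exists_subset_of_mem_open hxU hU
    obtain ⟨m, htm, hrm, -⟩ := SeqLT.prefixOf.exists_slt hν hx.2 hxr
    exact h m htm.1 ((basicOpen_mono hrm).trans hrU)
  have hspec := avoidingStrat_spec_of_follows hν hreg hG isOpen_univ (subset_univ _) hts
  refine ⟨avoidingStrat hν G s, fun γ hγ _ p hp =>
    ((avoidingStrat_spec hν hreg hG isOpen_univ (subset_univ _) hts hγ hp).1.of_le hts),
    fun p hp hfol => ?_⟩
  have hx := isOutcome_chainLimit hν hp.1
  refine ⟨_, hx, ?_⟩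
  have h0 : 0 < ν.ord := (one_lt_ord hν).pos
  have hsp0 := (hspec _ hp h0 (hfol 0 h0 ⟨0, (mul_zero 2).symm⟩)).1 rfl
  have hxs := basicOpen_mono hsp0 (hx.1 0 h0)
  have hxG : chainLimit hν p ν.ord ∉ ⋃ δ < ν.ord, G δ := by
    simp only [mem_iUnion₂, not_exists]
    intro δ hδ hxδ
    have hγ := two_mul_lt_ord hν hδ
    have hdisj := (hspec _ hp hγ (hfol _ hγ ⟨δ, rfl⟩)).2
    rw [two_mul_div_two] at hdisj
    exact hdisj.ne_of_mem (hx.1 _ hγ) hxδ rfl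
  by_contra hxA
  exact hxG (hcover ⟨mem_symmDiff.2 (Or.inr ⟨hsU hxs, fun h => hxA h.1⟩), trivial⟩)

end BanachMazur

theorem statement15_general (ν : Cardinal.{u}) (hreg : ν.IsRegular)
    (A : Set (SeqFull ν.ord ν.ord)) (t : SeqLT ν.ord ν.ord)
    (hBaire : BaireSet (A ∩ basicOpen t)) :
    MeagerIn A (basicOpen t) ↔ ¬WinIStrat t A :=
  ⟨not_winIStrat_of_meagerIn hreg, fun hnw =>
    by_contra fun hnm => hnw (winIStrat_of_not_meagerIn hreg hBaire hnm)⟩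

/-- For an infinite regular cardinal `ν` with `ν^{<ν} = ν`, if `A ∩ N_t` is `ν`-Baire then
`A` is `ν`-meager in `N_t` iff player I has no winning strategy in `G^t_ν(A)`. -/
theorem statement15 (ν : Cardinal.{u}) (hreg : ν.IsRegular)
    (hpow : Cardinal.powerlt ν ν = ν)
    (A : Set (SeqFull ν.ord ν.ord)) (t : SeqLT ν.ord ν.ord)
    (hBaire : BaireSet (A ∩ basicOpen t)) :
    MeagerIn A (basicOpen t) ↔ ¬WinIStrat t A :=
  statement15_general ν hreg A t hBaire

end
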